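/- Let G be a finite connected simple graph with vertex set V and shortest-path distance d, let s ≥ 1 be a natural number, let del : V → ℕ be a delay function, and let S ⊆ V be a set of nodes with del(v) ≥ 5s for every v ∈ S. Define the updated delay function del' by del'(v) = del(v) − 5s for v ∈ S and del'(v) = del(v) for v ∉ S. Fix u ∈ V and suppose some v ∈ S satisfies del(v) + d(v,u) ≤ wait_{del}(u) + 2s. Then (a) wait_{del'}(u) ≤ wait_{del}(u) − 3s, and (b) for every w ∉ S one has del'(w) + d(w,u) > wait_{del'}(u) + 2s, i.e. w ∉ frontier^{2s}_{del'}(u). -/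
import Mathlib


/-- The waiting time of `u` with respect to a delay function `f`:
`wait_f(u) = min_{v ∈ V} (f(v) + d(v,u))`. -/
noncomputable def waitT {V : Type*} [Fintype V] [Nonempty V]
    (G : SimpleGraph V) (f : V → ℕ) (u : V) : ℕ :=
  Finset.univ.inf' Finset.univ_nonempty (fun v => f v + G.dist v u)

/-- Decreasing the delays of the nodes in `S` by `5s`: if some `v ∈ S` satisfies
`del(v) + d(v,u) ≤ wait_del(u) + 2s`, then (a) `wait_del'(u) ≤ wait_del(u) − 3s`
(stated additively as `wait_del'(u) + 3s ≤ wait_del(u)`), and (b) every `w ∉ S`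
satisfies `del'(w) + d(w,u) > wait_del'(u) + 2s`, i.e. `w ∉ frontier^{2s}_{del'}(u)`. -/
theorem stmt4 {V : Type*} [Fintype V] [Nonempty V]
    (G : SimpleGraph V) (hG : G.Connected)
    (s : ℕ) (hs : 1 ≤ s)
    (del del' : V → ℕ) (S : Set V)
    (hS : ∀ v ∈ S, 5 * s ≤ del v)
    (hdel'S : ∀ v ∈ S, del' v = del v - 5 * s)
    (hdel'nS : ∀ v ∉ S, del' v = del v)
    (u : V) (v : V) (hv : v ∈ S)
    (hvu : del v + G.dist v u ≤ waitT G del u + 2 * s) :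
    waitT G del' u + 3 * s ≤ waitT G del u ∧
      ∀ w ∉ S, waitT G del' u + 2 * s < del' w + G.dist w u := by
  have hle : ∀ (f : V → ℕ) (w : V), waitT G f u ≤ f w + G.dist w u := by
    intro f w
    exact Finset.inf'_le _ (Finset.mem_univ w)
  have h1 : waitT G del' u ≤ del' v + G.dist v u := hle del' v
  have h2 : del' v = del v - 5 * s := hdel'S v hv
  have h3 : 5 * s ≤ del v := hS v hv
  have ha : waitT G del' u + 3 * s ≤ waitT G del u := by omega
  refine ⟨ha, fun w hw => ?_⟩
  have h4 : waitT G del u ≤ del w + G.dist w u := hle del w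
  rw [hdel'nS w hw]
  omega
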